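/- Let d ≥ 1 and let P̃ and Q̃ be real polynomials. There exist complex polynomials P, Q with deg P ≤ d, deg Q ≤ d−1, P of parity d mod 2, Q of parity (d−1) mod 2, and |P(x)|² + (1−x²)·|Q(x)|² = 1 for all x ∈ [-1,1], such that the real part of P equals P̃ and the real part of Q equals Q̃ (coefficientwise), if and only if deg P̃ ≤ d, deg Q̃ ≤ d−1, P̃ has parity d mod 2, Q̃ has parity (d−1) mod 2, and P̃(x)² + (1−x²)·Q̃(x)² ≤ 1 for all x ∈ [-1,1]. -/

import Mathlib

/-!
Necessity: the real part of a complex number is bounded by its modulus. Sufficiency: put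
`R = 1 - P̃² - (1 - x²) Q̃²`, an even polynomial of degree `≤ 2d`, nonnegative on `[-1, 1]`.
It is enough to write `R = A² + (1 - x²) B²` with real `A`, `B` of the degrees and parities
of `P`, `Q`, and then take `P = P̃ + iA`, `Q = Q̃ + iB`. Such representations multiply, being
`|A + i√(1 - x²) B|²`. Writing `R(x) = S(x²)` with `S ≥ 0` on `[0, 1]`, factor `S` into
linear factors nonnegative on `[0, 1]` (from real roots outside `(0, 1)`) and quadratics
`(y - a)² + b²` (from non-real roots, and from roots in `(0, 1)`, which are double because
`S ≥ 0` there), each of which has such a representation explicitly.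
-/

open Matrix Polynomial

/-- The single-qubit Z-rotation `Z(φ) = diag(e^{iφ}, e^{-iφ})`. -/
noncomputable def Zrot (φ : ℝ) : Matrix (Fin 2) (Fin 2) ℂ :=
  !![Complex.exp (Complex.I * (φ : ℂ)), 0; 0, Complex.exp (-(Complex.I * (φ : ℂ)))]

/-- The QSP signal oracle `W(x)`, with diagonal entries `x` and off-diagonal
entries `i·√(1-x²)`. -/
noncomputable def Wosc (x : ℝ) : Matrix (Fin 2) (Fin 2) ℂ :=
  !![(x : ℂ), Complex.I * (Real.sqrt (1 - x ^ 2) : ℂ);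
     Complex.I * (Real.sqrt (1 - x ^ 2) : ℂ), (x : ℂ)]

/-- The QSP unitary `U_Φ(x) = Z(φ₀)·W(x)·Z(φ₁)·W(x)·Z(φ₂)⋯W(x)·Z(φ_d)`. -/
noncomputable def qspU {d : ℕ} (Φ : Fin (d + 1) → ℝ) (x : ℝ) :
    Matrix (Fin 2) (Fin 2) ℂ :=
  Zrot (Φ 0) * (List.ofFn fun k : Fin d => Wosc x * Zrot (Φ k.succ)).prod

/-- The nested QSP unitary `(Φ1 ∘ Φ0)(x)`: the QSP circuit of `Φ1` with each
oracle `W(x)` replaced by `U_{Φ0}(x)`. -/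
noncomputable def nestedU {n m : ℕ} (Φ1 : Fin (m + 1) → ℝ) (Φ0 : Fin (n + 1) → ℝ)
    (x : ℝ) : Matrix (Fin 2) (Fin 2) ℂ :=
  Zrot (Φ1 0) * (List.ofFn fun k : Fin m => qspU Φ0 x * Zrot (Φ1 k.succ)).prod

/-- A phase list `Φ = (φ_0, …, φ_d)` is antisymmetric if `φ_k = -φ_{d-k}` for all `k`. -/
def Antisym {d : ℕ} (Φ : Fin (d + 1) → ℝ) : Prop := ∀ k, Φ (Fin.rev k) = -Φ k

/-- A polynomial has parity `m mod 2` if only monomials of degree congruent to `m`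
modulo 2 have nonzero coefficients. -/
def HasParity {R : Type*} [Semiring R] (m : ℕ) (P : Polynomial R) : Prop :=
  ∀ k, k % 2 ≠ m % 2 → P.coeff k = 0

open Set Topology

section Parity

variable {R : Type*} {m n : ℕ}

section Semiring

variable [Semiring R] {P Q : R[X]}

theorem HasParity.of_mod_two_eq (h : m % 2 = n % 2) (hP : HasParity m P) : HasParity n P :=
  fun k hk => hP k (h ▸ hk)

theorem hasParity_C (c : R) : HasParity 0 (C c) := fun k hk => by
  rw [coeff_C, if_neg (by omega)]

theorem hasParity_one : HasParity 0 (1 : R[X]) := by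
  simpa using hasParity_C (1 : R)

theorem hasParity_X_pow (k : ℕ) : HasParity k (X ^ k : R[X]) := fun j hj => by
  rw [coeff_X_pow, if_neg (by omega)]

theorem hasParity_X : HasParity 1 (X : R[X]) := by
  simpa using hasParity_X_pow (R := R) 1

theorem HasParity.add (hP : HasParity m P) (hQ : HasParity m Q) : HasParity m (P + Q) :=
  fun k hk => by rw [coeff_add, hP k hk, hQ k hk, add_zero]

theorem HasParity.mul (hP : HasParity m P) (hQ : HasParity n Q) : HasParity (m + n) (P * Q) := by
  intro k hk
  rw [coeff_mul]
  refine Finset.sum_eq_zero fun ij hij => ?_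
  rw [Finset.HasAntidiagonal.mem_antidiagonal] at hij
  by_cases hi : ij.1 % 2 = m % 2
  · rw [hQ ij.2 (by omega), mul_zero]
  · rw [hP ij.1 hi, zero_mul]

theorem HasParity.pow (hP : HasParity m P) (k : ℕ) : HasParity (m * k) (P ^ k) := by
  induction k with
  | zero => simpa using hasParity_one
  | succ k ih => simpa [pow_succ, mul_add] using ih.mul hP

end Semiring

section Ring

variable [Ring R] {P Q : R[X]}

theorem HasParity.sub (hP : HasParity m P) (hQ : HasParity m Q) : HasParity m (P - Q) :=
  fun k hk => by rw [coeff_sub, hP k hk, hQ k hk, sub_zero]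

theorem hasParity_one_sub_X_sq : HasParity 0 (1 - X ^ 2 : R[X]) :=
  hasParity_one.sub ((hasParity_X_pow 2).of_mod_two_eq rfl)

end Ring

end Parity

theorem expand_contract_of_hasParity_zero {R : Type*} [CommSemiring R] {P : R[X]}
    (hP : HasParity 0 P) : expand R 2 (contract 2 P) = P := by
  ext k
  rw [coeff_expand two_pos, coeff_contract two_ne_zero]
  split_ifs with h
  · rw [Nat.div_mul_cancel h]
  · exact (hP k (by omega)).symm

theorem degree_mul_lt_of_le_of_lt {R : Type*} [Semiring R] {p q : R[X]} {a b : ℕ}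
    (hp : p.degree ≤ a) (hq : q.degree < b) : (p * q).degree < a + b :=
  (degree_mul_le _ _).trans_lt <|
    (add_le_add hp le_rfl).trans_lt (WithBot.add_lt_add_left WithBot.coe_ne_bot hq)

theorem degree_le_natCast_sub_one {R : Type*} [Semiring R] {p : R[X]} {d : ℕ}
    (h : p.degree < d) : p.degree ≤ ↑(d - 1) := by
  rw [degree_lt_iff_coeff_zero] at h
  rw [degree_le_iff_coeff_zero]
  intro m hm
  have : d - 1 < m := by exact_mod_cast hm
  exact h m (by omega)

theorem Continuous.forall_nonneg_of_forall_ne {α : Type*} [TopologicalSpace α] {a : α}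
    [(𝓝[≠] a).NeBot] {f : α → ℝ} (hf : Continuous f) {U : Set α} (hU : IsOpen U)
    (h : ∀ y ∈ U, y ≠ a → 0 ≤ f y) : ∀ y ∈ U, 0 ≤ f y := fun _ hy =>
  closure_minimal (fun z hz => h z hz.1 hz.2) (isClosed_le continuous_const hf)
    ((dense_compl_singleton a).open_subset_closure_inter hU hy)

-- `u` is a critical point of `S`, hence also a root of its derivative.
theorem sq_X_sub_C_dvd_of_isLocalMin {S : ℝ[X]} {u : ℝ} (hS : S ≠ 0) (hu : S.IsRoot u)
    (hmin : IsLocalMin (fun x => S.eval x) u) : (X - C u) ^ 2 ∣ S := by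
  rw [← le_rootMultiplicity_iff hS]
  refine (one_lt_rootMultiplicity_iff_isRoot hS).mpr ⟨hu, ?_⟩
  rw [IsRoot, ← Polynomial.deriv]
  exact hmin.deriv_eq_zero

theorem exists_sq_add_sq_dvd {S : ℝ[X]} (hdeg : 0 < S.natDegree)
    (hS : ∀ y ∈ Ioo 0 1, 0 ≤ S.eval y) (hroots : ∀ u, S.IsRoot u → u ∈ Ioo 0 1) :
    ∃ a b : ℝ, (X - C a) ^ 2 + C (b ^ 2) ∣ S := by
  obtain ⟨z, hz⟩ :=
    IsAlgClosed.exists_aeval_eq_zero ℂ S (natDegree_pos_iff_degree_pos.mp hdeg).ne'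
  by_cases him : z.im = 0
  · have hu : S.IsRoot z.re := by
      rw [← Complex.re_add_im z, him, Complex.ofReal_zero, zero_mul, add_zero,
        ← Complex.coe_algebraMap, aeval_algebraMap_apply] at hz
      simpa using hz
    have hmin : IsLocalMin (fun x => S.eval x) z.re :=
      Filter.mem_of_superset (Ioo_mem_nhds (hroots _ hu).1 (hroots _ hu).2) fun y hy => by
        simpa [hu.eq_zero] using hS y hy
    refine ⟨z.re, 0, ?_⟩
    simpa using sq_X_sub_C_dvd_of_isLocalMin (ne_zero_of_natDegree_gt hdeg) hu hmin
  · refine ⟨z.re, z.im, ?_⟩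
    convert S.quadratic_dvd_of_aeval_eq_zero_im_ne_zero hz him using 1
    simp only [Complex.sq_norm, Complex.normSq_apply, map_add, map_mul, map_pow, map_ofNat]
    ring

/-- On `[-1, 1]`, `A² + (1 - x²) B² = |A + i√(1 - x²) B|²`; the conditions on `A`, `B` are
those on the imaginary parts of a QSP pair `(P, Q)` of degree `n`. -/
def IsQSPNormSq (n : ℕ) (R : ℝ[X]) : Prop :=
  ∃ A B : ℝ[X], A.degree ≤ n ∧ B.degree < n ∧ HasParity n A ∧ HasParity (n + 1) B ∧
    A ^ 2 + (1 - X ^ 2) * B ^ 2 = R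

-- `(A + isB)(C + isD) = (AC - s²BD) + is(AD + BC)` with `s = √(1 - x²)`.
theorem IsQSPNormSq.mul {n m : ℕ} {R S : ℝ[X]} (hR : IsQSPNormSq n R) (hS : IsQSPNormSq m S) :
    IsQSPNormSq (n + m) (R * S) := by
  obtain ⟨A, B, hA, hB, hApar, hBpar, rfl⟩ := hR
  obtain ⟨C, D, hC, hD, hCpar, hDpar, rfl⟩ := hS
  refine ⟨A * C - (1 - X ^ 2) * (B * D), A * D + B * C, ?_, ?_, ?_, ?_, by ring⟩
  · have hBD : ((1 - X ^ 2 : ℝ[X]) * (B * D)).degree ≤ n + m := calc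
      _ ≤ 2 + (B.degree + D.degree) := degree_mul_le_of_le (by compute_degree) (degree_mul_le _ _)
      _ = (B.degree + 1) + (D.degree + 1) := by rw [← one_add_one_eq_two]; abel
      _ ≤ n + m := add_le_add (Nat.WithBot.add_one_le_of_lt hB) (Nat.WithBot.add_one_le_of_lt hD)
    push_cast
    exact (degree_sub_le _ _).trans (max_le (degree_mul_le_of_le hA hC) hBD)
  · rw [Nat.cast_add, add_comm (n : WithBot ℕ), mul_comm B]
    exact (degree_add_le _ _).trans_lt (max_lt (add_comm (n : WithBot ℕ) m ▸
      degree_mul_lt_of_le_of_lt hA hD) (degree_mul_lt_of_le_of_lt hC hB))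
  · exact (HasParity.mul hApar hCpar).sub
      ((hasParity_one_sub_X_sq.mul (HasParity.mul hBpar hDpar)).of_mod_two_eq (by omega))
  · exact ((HasParity.mul hApar hDpar).of_mod_two_eq (by omega)).add
      ((HasParity.mul hBpar hCpar).of_mod_two_eq (by omega))

theorem isQSPNormSq_one : IsQSPNormSq 1 1 :=
  ⟨X, 1, degree_X_le, by rw [degree_one]; decide, hasParity_X, hasParity_one.of_mod_two_eq rfl,
    by ring⟩

theorem IsQSPNormSq.mono {n m : ℕ} {R : ℝ[X]} (hR : IsQSPNormSq n R) (hnm : n ≤ m) :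
    IsQSPNormSq m R := by
  induction hnm with
  | refl => exact hR
  | step _ ih => simpa using ih.mul isQSPNormSq_one

theorem isQSPNormSq_C {c : ℝ} (hc : 0 ≤ c) : IsQSPNormSq 0 (C c) := by
  refine ⟨C √c, 0, degree_C_le, by simp, hasParity_C _, fun _ _ => coeff_zero _, ?_⟩
  rw [← C_pow, Real.sq_sqrt hc]
  ring

theorem isQSPNormSq_expand_linear {c e : ℝ} (hc : 0 ≤ c) (hce : 0 ≤ c + e) :
    IsQSPNormSq 1 (expand ℝ 2 (C e * X + C c)) := by
  refine ⟨C √(c + e) * X, C √c, degree_C_mul_X_le _, degree_C_le.trans_lt (by decide),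
    (hasParity_C _).mul hasParity_X, (hasParity_C _).of_mod_two_eq rfl, ?_⟩
  refine Polynomial.funext fun x => ?_
  simp only [map_add, map_mul, expand_C, expand_X, eval_add, eval_mul, eval_pow, eval_sub,
    eval_one, eval_C, eval_X, mul_pow, Real.sq_sqrt hc, Real.sq_sqrt hce]
  ring

/- With `z = a + bi`, `r = |z|`, `s = |1 - z|`: take `A = (r + s) X² - r` and `B = γ X` with
`γ² = (r + s)² - 1`, which is nonnegative by the triangle inequality `|z| + |1 - z| ≥ 1`. -/
theorem isQSPNormSq_expand_sq_add_sq (a b : ℝ) :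
    IsQSPNormSq 2 (expand ℝ 2 ((X - C a) ^ 2 + C (b ^ 2))) := by
  set r := √(a ^ 2 + b ^ 2)
  set s := √((1 - a) ^ 2 + b ^ 2)
  have hr : r ^ 2 = a ^ 2 + b ^ 2 := Real.sq_sqrt (by positivity)
  have hs : s ^ 2 = (1 - a) ^ 2 + b ^ 2 := Real.sq_sqrt (by positivity)
  have hrs : 1 ≤ r + s := by
    have := Real.abs_le_sqrt (le_add_of_nonneg_right (sq_nonneg b) : a ^ 2 ≤ a ^ 2 + b ^ 2)
    have := Real.abs_le_sqrt
      (le_add_of_nonneg_right (sq_nonneg b) : (1 - a) ^ 2 ≤ (1 - a) ^ 2 + b ^ 2)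
    linarith [le_abs_self a, le_abs_self (1 - a)]
  set γ := √((r + s) ^ 2 - 1)
  have hγ : γ ^ 2 = (r + s) ^ 2 - 1 := Real.sq_sqrt (by nlinarith)
  refine ⟨C (r + s) * X ^ 2 - C r, C γ * X, by compute_degree!,
    (degree_C_mul_X_le γ).trans_lt (by decide), ?_, ?_, ?_⟩
  · exact ((hasParity_C _).mul (hasParity_X_pow 2)).sub ((hasParity_C r).of_mod_two_eq rfl)
  · exact ((hasParity_C _).mul hasParity_X).of_mod_two_eq rfl
  · refine Polynomial.funext fun x => ?_
    simp only [map_add, map_pow, map_sub, expand_C, expand_X, eval_add, eval_mul, eval_pow,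
      eval_sub, eval_one, eval_C, eval_X]
    linear_combination (x ^ 2 - x ^ 4) * hγ + x ^ 2 * hs + (1 - x ^ 2) * hr

theorem exists_isQSPNormSq_factor {S : ℝ[X]} (hdeg : 0 < S.natDegree)
    (hS : ∀ y ∈ Ioo 0 1, 0 ≤ S.eval y) :
    ∃ L : ℝ[X], 0 < L.natDegree ∧ IsQSPNormSq L.natDegree (expand ℝ 2 L) ∧ L ∣ S ∧
      ∃ a, ∀ y ∈ Ioo (0 : ℝ) 1, y ≠ a → 0 < L.eval y := by
  by_cases hroot : ∃ u, S.IsRoot u ∧ u ∉ Ioo 0 1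
  · obtain ⟨u, hu, hu01⟩ := hroot
    rcases le_or_gt u 0 with hu0 | hu0
    · refine ⟨C 1 * X + C (-u), by rw [natDegree_linear one_ne_zero]; exact one_pos, ?_, ?_,
        u, fun y hy _ => ?_⟩
      · rw [natDegree_linear one_ne_zero]
        exact isQSPNormSq_expand_linear (by linarith) (by linarith)
      · simpa [sub_eq_add_neg] using dvd_iff_isRoot.mpr hu
      · simpa using hu0.trans_lt hy.1
    · have hu1 : 1 ≤ u := not_lt.mp fun h => hu01 ⟨hu0, h⟩
      refine ⟨C (-1) * X + C u, by rw [natDegree_linear (by norm_num)]; exact one_pos, ?_, ?_,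
        u, fun y hy _ => ?_⟩
      · rw [natDegree_linear (by norm_num)]
        exact isQSPNormSq_expand_linear (by linarith) (by linarith)
      · have hneg : C (-1) * X + C u = -(X - C u) := by simp only [map_neg, map_one]; ring
        rw [hneg, neg_dvd]
        exact dvd_iff_isRoot.mpr hu
      · simp only [eval_add, eval_mul, eval_C, eval_X]
        linarith [hy.2]
  · push Not at hroot
    obtain ⟨a, b, hab⟩ := exists_sq_add_sq_dvd hdeg hS hroot
    have hdeg2 : ((X - C a) ^ 2 + C (b ^ 2)).natDegree = 2 := by compute_degree!
    refine ⟨_, by omega, by rw [hdeg2]; exact isQSPNormSq_expand_sq_add_sq a b, hab, a,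
      fun y _ hya => ?_⟩
    simp only [eval_add, eval_pow, eval_sub, eval_C, eval_X]
    exact (sq_pos_of_ne_zero (sub_ne_zero.mpr hya)).trans_le
      (le_add_of_nonneg_right (sq_nonneg b))

theorem isQSPNormSq_expand_of_nonneg (S : ℝ[X]) (hS : ∀ y ∈ Ioo 0 1, 0 ≤ S.eval y) :
    IsQSPNormSq S.natDegree (expand ℝ 2 S) := by
  induction hn : S.natDegree using Nat.strong_induction_on generalizing S with
  | _ n ih =>
  rcases Nat.eq_zero_or_pos n with rfl | hpos
  · have hc := hS (1 / 2) (by norm_num)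
    rw [eq_C_of_natDegree_eq_zero hn, eval_C] at hc
    rw [eq_C_of_natDegree_eq_zero hn, expand_C]
    exact isQSPNormSq_C hc
  · obtain ⟨L, hLdeg, hL, ⟨T, rfl⟩, a, hLpos⟩ := exists_isQSPNormSq_factor (hn ▸ hpos) hS
    have hT : ∀ y ∈ Ioo 0 1, 0 ≤ T.eval y :=
      T.continuous.forall_nonneg_of_forall_ne isOpen_Ioo fun y hy hya =>
        nonneg_of_mul_nonneg_right (by simpa using hS y hy) (hLpos y hy hya)
    have hT0 : T ≠ 0 := by
      rintro rfl
      rw [mul_zero, natDegree_zero] at hn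
      omega
    rw [natDegree_mul (ne_zero_of_natDegree_gt hLdeg) hT0] at hn
    rw [← hn, map_mul]
    exact hL.mul (ih _ (by omega) T hT rfl)

theorem isQSPNormSq_of_even_of_nonneg {n : ℕ} {R : ℝ[X]} (hR : HasParity 0 R)
    (hdeg : R.natDegree ≤ 2 * n) (hnn : ∀ x ∈ Ioo (-1) 1, 0 ≤ R.eval x) :
    IsQSPNormSq n R := by
  set S := contract 2 R
  have hRS : expand ℝ 2 S = R := expand_contract_of_hasParity_zero hR
  have hS : ∀ y ∈ Ioo 0 1, 0 ≤ S.eval y := fun y hy => by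
    have := hnn √y
      ⟨by linarith [Real.sqrt_nonneg y], Real.sqrt_one ▸ Real.sqrt_lt_sqrt hy.1.le hy.2⟩
    rwa [← hRS, expand_eval, Real.sq_sqrt hy.1.le] at this
  have hdegS : S.natDegree ≤ n := by
    have := natDegree_expand 2 S
    rw [hRS] at this
    omega
  exact hRS ▸ (isQSPNormSq_expand_of_nonneg S hS).mono hdegS

theorem isQSPNormSq_one_sub_sq_sub {d : ℕ} (hd : 1 ≤ d) {U V : ℝ[X]} (hU : U.degree ≤ d)
    (hV : V.degree ≤ ↑(d - 1)) (hUpar : HasParity d U) (hVpar : HasParity (d - 1) V)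
    (h : ∀ x ∈ Icc (-1 : ℝ) 1, U.eval x ^ 2 + (1 - x ^ 2) * V.eval x ^ 2 ≤ 1) :
    IsQSPNormSq d (1 - U ^ 2 - (1 - X ^ 2) * V ^ 2) := by
  refine isQSPNormSq_of_even_of_nonneg ?_ ?_ fun x hx => ?_
  · exact (hasParity_one.sub ((hUpar.pow 2).of_mod_two_eq (by omega))).sub
      ((hasParity_one_sub_X_sq.mul (hVpar.pow 2)).of_mod_two_eq (by omega))
  · have h1 : (1 - X ^ 2 : ℝ[X]).natDegree ≤ 2 := by compute_degree!
    have hU2 := natDegree_pow_le_of_le 2 (natDegree_le_iff_degree_le.mpr hU)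
    have hV2 := natDegree_pow_le_of_le 2 (natDegree_le_iff_degree_le.mpr hV)
    exact (natDegree_sub_le_of_le (natDegree_sub_le_of_le natDegree_one.le hU2)
      (natDegree_mul_le_of_le h1 hV2)).trans (by omega)
  · have := h x (Ioo_subset_Icc_self hx)
    simp only [eval_sub, eval_one, eval_pow, eval_mul, eval_X]
    linarith

noncomputable def ofReIm (U V : ℝ[X]) : ℂ[X] :=
  U.map Complex.ofRealHom + C Complex.I * V.map Complex.ofRealHom

section ofReIm

variable {U V : ℝ[X]}

@[simp] theorem coeff_ofReIm (k : ℕ) : (ofReIm U V).coeff k = ⟨U.coeff k, V.coeff k⟩ := by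
  apply Complex.ext <;> simp [ofReIm]

theorem eval_ofReIm (x : ℝ) : (ofReIm U V).eval (x : ℂ) = ⟨U.eval x, V.eval x⟩ := by
  simp only [ofReIm, eval_add, eval_mul, eval_C, eval_map, ← Complex.ofRealHom_eq_coe,
    eval₂_hom]
  apply Complex.ext <;> simp

theorem degree_ofReIm_le {n : WithBot ℕ} (hU : U.degree ≤ n) (hV : V.degree ≤ n) :
    (ofReIm U V).degree ≤ n := by
  rw [degree_le_iff_coeff_zero] at *
  intro m hm
  simp [Complex.ext_iff, hU m hm, hV m hm]

theorem HasParity.ofReIm {m : ℕ} (hU : HasParity m U) (hV : HasParity m V) :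
    HasParity m (ofReIm U V) :=
  fun k hk => by simp [Complex.ext_iff, hU k hk, hV k hk]

end ofReIm

section RealPart

variable {P : ℂ[X]} {U : ℝ[X]}

theorem degree_le_of_coeff_re {n : WithBot ℕ} (hPU : ∀ k, (P.coeff k).re = U.coeff k)
    (hP : P.degree ≤ n) : U.degree ≤ n := by
  rw [degree_le_iff_coeff_zero] at *
  intro m hm
  rw [← hPU, hP m hm, Complex.zero_re]

theorem HasParity.of_coeff_re {m : ℕ} (hPU : ∀ k, (P.coeff k).re = U.coeff k)
    (hP : HasParity m P) : HasParity m U :=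
  fun k hk => by rw [← hPU, hP k hk, Complex.zero_re]

theorem re_eval_ofReal_of_coeff_re (hPU : ∀ k, (P.coeff k).re = U.coeff k) (x : ℝ) :
    (P.eval (x : ℂ)).re = U.eval x := by
  set N := max P.natDegree U.natDegree + 1
  rw [eval_eq_sum_range' (show P.natDegree < N by omega),
    eval_eq_sum_range' (show U.natDegree < N by omega), Complex.re_sum]
  refine Finset.sum_congr rfl fun k _ => ?_
  rw [← hPU k, ← Complex.ofReal_pow, Complex.re_mul_ofReal]

theorem sq_eval_le_normSq_of_coeff_re (hPU : ∀ k, (P.coeff k).re = U.coeff k) (x : ℝ) :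
    U.eval x ^ 2 ≤ Complex.normSq (P.eval (x : ℂ)) := by
  rw [← re_eval_ofReal_of_coeff_re hPU, sq]
  exact Complex.re_sq_le_normSq _

end RealPart

/-- Characterization of achievable real parts: a pair of real
polynomials `(P̃, Q̃)` arises coefficientwise as the real parts of a valid QSP
pair `(P, Q)` iff it satisfies the degree and parity constraints and
`P̃(x)² + (1-x²)·Q̃(x)² ≤ 1` on `[-1,1]`. -/
theorem qsp_real_part_characterization (d : ℕ) (hd : 1 ≤ d)
    (Pt Qt : Polynomial ℝ) :
    (∃ P Q : Polynomial ℂ,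
        P.degree ≤ (d : WithBot ℕ) ∧ Q.degree ≤ ((d - 1 : ℕ) : WithBot ℕ) ∧
        HasParity d P ∧ HasParity (d - 1) Q ∧
        (∀ x ∈ Set.Icc (-1 : ℝ) 1,
          Complex.normSq (P.eval (x : ℂ)) +
            (1 - x ^ 2) * Complex.normSq (Q.eval (x : ℂ)) = 1) ∧
        (∀ k, (P.coeff k).re = Pt.coeff k) ∧
        (∀ k, (Q.coeff k).re = Qt.coeff k)) ↔
      (Pt.degree ≤ (d : WithBot ℕ) ∧ Qt.degree ≤ ((d - 1 : ℕ) : WithBot ℕ) ∧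
        HasParity d Pt ∧ HasParity (d - 1) Qt ∧
        ∀ x ∈ Set.Icc (-1 : ℝ) 1,
          (Pt.eval x) ^ 2 + (1 - x ^ 2) * (Qt.eval x) ^ 2 ≤ 1) := by
  constructor
  · rintro ⟨P, Q, hP, hQ, hPpar, hQpar, hnorm, hPre, hQre⟩
    refine ⟨degree_le_of_coeff_re hPre hP, degree_le_of_coeff_re hQre hQ,
      hPpar.of_coeff_re hPre, hQpar.of_coeff_re hQre, fun x hx => ?_⟩
    have hx2 : 0 ≤ 1 - x ^ 2 := by nlinarith [hx.1, hx.2]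
    have hP2 := sq_eval_le_normSq_of_coeff_re hPre x
    have hQ2 := sq_eval_le_normSq_of_coeff_re hQre x
    linarith [mul_le_mul_of_nonneg_left hQ2 hx2, hnorm x hx]
  · rintro ⟨hP, hQ, hPpar, hQpar, hineq⟩
    obtain ⟨A, B, hA, hB, hApar, hBpar, hAB⟩ :=
      isQSPNormSq_one_sub_sq_sub hd hP hQ hPpar hQpar hineq
    refine ⟨ofReIm Pt A, ofReIm Qt B, degree_ofReIm_le hP hA,
      degree_ofReIm_le hQ (degree_le_natCast_sub_one hB), hPpar.ofReIm hApar,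
      hQpar.ofReIm (HasParity.of_mod_two_eq (by omega) hBpar), fun x _ => ?_, by simp, by simp⟩
    have hABx := congrArg (eval x) hAB
    simp only [eval_add, eval_sub, eval_mul, eval_pow, eval_one, eval_X] at hABx
    rw [eval_ofReIm, eval_ofReIm, Complex.normSq_mk, Complex.normSq_mk]
    linear_combination hABx
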